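/- Let Ψ be strictly decreasing and nonnegative on I = (a,b) and f be Ψ-concave on I. Then f is strictly Ψ-concave on I (i.e., the defining inequality (f(x)-f(y))/(Ψ(x)-Ψ(y)) < (f(y)-f(z))/(Ψ(y)-Ψ(z)) holds strictly for all x < y < z) if and only if there is no open subinterval (c,d) ⊂ I on which f is Ψ-affine, i.e., of the form f(x) = AΨ(x) + B. -/

import Mathlib

/-!
A Ψ-concave function has nondecreasing Ψ-slopes `(f x - f y) / (Ψ x - Ψ y)`, and the slope over
`[x, y]` is a weighted mean (a mediant) of the slopes over `[x, w]` and `[w, y]`. Hence an affine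
function of `Ψ` has constant slope, which rules out strict inequality; conversely, if two adjacent
slopes on `x < y < z` agree, squeezing by mediants forces every slope through `y` inside `(x, z)`
to take that common value, so `f` is Ψ-affine on `(x, z)`.
-/

open Set Filter Topology

def PsiConcaveOn (Ψ f : ℝ → ℝ) (a b : ℝ) : Prop :=
  ∀ x y z : ℝ, x ∈ Set.Ioo a b → y ∈ Set.Ioo a b → z ∈ Set.Ioo a b →
    x < y → y < z →
    (f x - f y) / (Ψ x - Ψ y) ≤ (f y - f z) / (Ψ y - Ψ z)

noncomputable def psiSlope (Ψ f : ℝ → ℝ) (x y : ℝ) : ℝ := (f x - f y) / (Ψ x - Ψ y)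

lemma add_div_add_mem_Icc {α : Type*} [Field α] [LinearOrder α] [IsStrictOrderedRing α]
    {u v p q : α} (hp : 0 < p) (hq : 0 < q) (h : u / p ≤ v / q) :
    (u + v) / (p + q) ∈ Icc (u / p) (v / q) := by
  rw [div_le_div_iff₀ hp hq] at h
  constructor
  · rw [div_le_div_iff₀ hp (add_pos hp hq)]; nlinarith
  · rw [div_le_div_iff₀ (add_pos hp hq) hq]; nlinarith

section PsiSlope

variable {Ψ f : ℝ → ℝ}

lemma psiSlope_mem_Icc {x w y : ℝ} (hxw : Ψ w < Ψ x) (hwy : Ψ y < Ψ w)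
    (h : psiSlope Ψ f x w ≤ psiSlope Ψ f w y) :
    psiSlope Ψ f x y ∈ Icc (psiSlope Ψ f x w) (psiSlope Ψ f w y) := by
  have := add_div_add_mem_Icc (sub_pos.2 hxw) (sub_pos.2 hwy) h
  simpa only [psiSlope, sub_add_sub_cancel] using this

lemma psiSlope_eq_iff {x y s : ℝ} (hxy : Ψ x ≠ Ψ y) :
    psiSlope Ψ f x y = s ↔ f x - f y = s * (Ψ x - Ψ y) :=
  div_eq_iff (sub_ne_zero.2 hxy)

lemma psiSlope_eq_of_eq_affine {x y A B : ℝ} (hxy : Ψ x ≠ Ψ y) (hfx : f x = A * Ψ x + B)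
    (hfy : f y = A * Ψ y + B) : psiSlope Ψ f x y = A :=
  (psiSlope_eq_iff hxy).2 (by rw [hfx, hfy]; ring)

variable {a b : ℝ}

theorem PsiConcaveOn.eq_affine_of_psiSlope_eq (hf : PsiConcaveOn Ψ f a b)
    (hΨ : StrictAntiOn Ψ (Ioo a b)) {x y z : ℝ} (hx : x ∈ Ioo a b) (hz : z ∈ Ioo a b)
    (hxy : x < y) (hyz : y < z) (heq : psiSlope Ψ f x y = psiSlope Ψ f y z) :
    ∀ w ∈ Ioo x z, f w = psiSlope Ψ f y z * Ψ w + (f y - psiSlope Ψ f y z * Ψ y) := by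
  set s := psiSlope Ψ f y z
  have hsub : Ioo x z ⊆ Ioo a b := Ioo_subset_Ioo hx.1.le hz.2.le
  have hy : y ∈ Ioo a b := hsub ⟨hxy, hyz⟩
  intro w hw
  have hwI := hsub hw
  rcases lt_trichotomy w y with hwy | rfl | hyw
  · have hΨxw := hΨ hx hwI hw.1
    have hΨwy := hΨ hwI hy hwy
    have hle : psiSlope Ψ f w y ≤ s := hf w y z hwI hy hz hwy hyz
    have hge : s ≤ psiSlope Ψ f w y :=
      heq ▸ (psiSlope_mem_Icc hΨxw hΨwy (hf x w y hx hwI hy hw.1 hwy)).2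
    have := (psiSlope_eq_iff hΨwy.ne').1 (le_antisymm hle hge)
    linarith
  · ring
  · have hΨyw := hΨ hy hwI hyw
    have hΨwz := hΨ hwI hz hw.2
    have hge : s ≤ psiSlope Ψ f y w := heq ▸ hf x y w hx hy hwI hxy hyw
    have hle : psiSlope Ψ f y w ≤ s :=
      (psiSlope_mem_Icc hΨyw hΨwz (hf y w z hy hwI hz hyw hw.2)).1
    have := (psiSlope_eq_iff hΨyw.ne').1 (le_antisymm hle hge)
    linarith

end PsiSlope

theorem stmt_9_general (a b : ℝ) (Ψ f : ℝ → ℝ)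
    (hΨanti : StrictAntiOn Ψ (Set.Ioo a b))
    (hf : PsiConcaveOn Ψ f a b) :
    (∀ x y z : ℝ, x ∈ Set.Ioo a b → y ∈ Set.Ioo a b → z ∈ Set.Ioo a b →
        x < y → y < z →
        (f x - f y) / (Ψ x - Ψ y) < (f y - f z) / (Ψ y - Ψ z)) ↔
      ¬ ∃ c d A B : ℝ, a ≤ c ∧ c < d ∧ d ≤ b ∧
        ∀ x ∈ Set.Ioo c d, f x = A * Ψ x + B := by
  constructor
  · rintro hstrict ⟨c, d, A, B, hac, hcd, hdb, haff⟩
    obtain ⟨y, hcy, hyd⟩ := exists_between hcd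
    obtain ⟨x, hcx, hxy⟩ := exists_between hcy
    obtain ⟨z, hyz, hzd⟩ := exists_between hyd
    have hx : x ∈ Ioo c d := ⟨hcx, hxy.trans hyd⟩
    have hy : y ∈ Ioo c d := ⟨hcy, hyd⟩
    have hz : z ∈ Ioo c d := ⟨hcy.trans hyz, hzd⟩
    have hsub : Ioo c d ⊆ Ioo a b := Ioo_subset_Ioo hac hdb
    have hxy' : psiSlope Ψ f x y = A :=
      psiSlope_eq_of_eq_affine (hΨanti (hsub hx) (hsub hy) hxy).ne' (haff x hx) (haff y hy)
    have hyz' : psiSlope Ψ f y z = A :=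
      psiSlope_eq_of_eq_affine (hΨanti (hsub hy) (hsub hz) hyz).ne' (haff y hy) (haff z hz)
    exact (hstrict x y z (hsub hx) (hsub hy) (hsub hz) hxy hyz).ne (hxy'.trans hyz'.symm)
  · intro hno x y z hx hy hz hxy hyz
    refine (hf x y z hx hy hz hxy hyz).lt_of_ne fun heq => hno ?_
    exact ⟨x, z, _, _, hx.1.le, hxy.trans hyz, hz.2.le,
      hf.eq_affine_of_psiSlope_eq hΨanti hx hz hxy hyz heq⟩

theorem stmt_9 (a b : ℝ) (Ψ f : ℝ → ℝ)
    (hΨanti : StrictAntiOn Ψ (Set.Ioo a b))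
    (hΨpos : ∀ x ∈ Set.Ioo a b, 0 ≤ Ψ x)
    (hf : PsiConcaveOn Ψ f a b) :
    (∀ x y z : ℝ, x ∈ Set.Ioo a b → y ∈ Set.Ioo a b → z ∈ Set.Ioo a b →
        x < y → y < z →
        (f x - f y) / (Ψ x - Ψ y) < (f y - f z) / (Ψ y - Ψ z)) ↔
      ¬ ∃ c d A B : ℝ, a ≤ c ∧ c < d ∧ d ≤ b ∧
        ∀ x ∈ Set.Ioo c d, f x = A * Ψ x + B :=
  stmt_9_general a b Ψ f hΨanti hf
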